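/- Let Σ be a finite abstract simplicial complex of dimension n ≥ 1 on a linearly ordered vertex set such that every (n−1)-simplex is a facet of at least one n-simplex, and such that the graph on Σ_{n−1} in which two distinct (n−1)-simplices are adjacent iff they are facets of a common n-simplex is connected. Then Σ is disorientable if and only if the normalized up-Laplacian Δ_{n−1}^up attains the maximal possible eigenvalue n+1, i.e., n+1 lies in the spectrum of Δ_{n−1}^up. -/

import Mathlib

open scoped BigOperators

/-- A finite abstract simplicial complex: a collection of nonempty finite vertex sets closed
under taking nonempty subsets. -/
def IsSimplicialComplex {U : Type*} [LinearOrder U] (K : Finset (Finset U)) : Prop :=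
  (∀ σ ∈ K, σ.Nonempty) ∧ ∀ τ ∈ K, ∀ σ ⊆ τ, σ.Nonempty → σ ∈ K

/-- The set `Σ_k` of `k`-simplices (sets of `k+1` vertices) of `K`. -/
def faces {U : Type*} [LinearOrder U] (K : Finset (Finset U)) (k : ℕ) : Finset (Finset U) :=
  K.filter fun σ => σ.card = k + 1

/-- The degree of a simplex `σ`: the number of cofacets of `σ` in `K`. -/
def degS {U : Type*} [LinearOrder U] (K : Finset (Finset U)) (σ : Finset U) : ℕ :=
  (K.filter fun τ => σ ⊆ τ ∧ τ.card = σ.card + 1).card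

/-- The incidence sign `sgn([σ], ∂[τ]) = (−1)^i` when the vertex of `τ` missing from `σ` is the
`(i+1)`-st smallest vertex of `τ` (and `0` if `τ ∖ σ` is not a singleton). -/
def sgnZ {U : Type*} [LinearOrder U] (σ τ : Finset U) : ℤ :=
  ∑ v ∈ τ \ σ, (-1 : ℤ) ^ (τ.filter fun x => x < v).card

/-- The matrix of the normalized up-Laplacian `Δ_k^up` acting on `k`-cochains:
`(Δ_k^up f)(σ) = f(σ) + (1/deg σ) Σ_{σ'≠σ, common cofacet τ} sgn([σ],∂[τ]) sgn([σ'],∂[τ]) f(σ')`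
(each pair of distinct `k`-simplices has at most one common cofacet `τ ∈ Σ_{k+1}`). -/
noncomputable def upLapMatrix {U : Type*} [LinearOrder U] (K : Finset (Finset U)) (k : ℕ) :
    Matrix {σ // σ ∈ faces K k} {σ // σ ∈ faces K k} ℝ :=
  fun σ σ' =>
    if σ = σ' then 1
    else (degS K σ.1 : ℝ)⁻¹ *
      ∑ τ ∈ K.filter (fun τ => τ.card = k + 2 ∧ σ.1 ⊆ τ ∧ σ'.1 ⊆ τ),
        (sgnZ σ.1 τ : ℝ) * (sgnZ σ'.1 τ : ℝ)

/-- A pure `n`-dimensional simplicial complex is disorientable if the `n`-simplices can be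
oriented (`ε : Σ_n → {±1}`) so that whenever an `(n−1)`-simplex `ρ` is a facet of two
`n`-simplices `τ, τ'`, the induced orientations on `ρ` agree:
`ε(τ)·sgn([ρ],∂[τ]) = ε(τ')·sgn([ρ],∂[τ'])`. -/
def Disorientable {U : Type*} [LinearOrder U] (K : Finset (Finset U)) (n : ℕ) : Prop :=
  ∃ ε : Finset U → ℝ, (∀ τ ∈ faces K n, ε τ = 1 ∨ ε τ = -1) ∧
    ∀ ρ ∈ faces K (n - 1), ∀ τ ∈ faces K n, ∀ τ' ∈ faces K n,
      ρ ⊆ τ → ρ ⊆ τ' → ε τ * (sgnZ ρ τ : ℝ) = ε τ' * (sgnZ ρ τ' : ℝ)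

/-!
Write `Δ = D⁻¹ δᵀ δ`, where `δ` is the coboundary from `(n-1)`-cochains to `n`-cochains and `D`
the degree. Then `Σ_σ deg σ · f σ · (Δ f) σ = Σ_τ (δ f τ)²`, and Cauchy–Schwarz on each
`n`-simplex `τ`, which has `n + 1` facets, bounds `(δ f τ)²` by `(n + 1) Σ_{σ ⊂ τ} f σ²`. So
`n + 1` is an eigenvalue exactly when some `f ≠ 0` is *coherent*: `sgn([σ],∂[τ]) · f σ` does not
depend on the facet `σ` of `τ`. A disorientation `ε` gives the coherent cochain
`f σ = ε τ · sgn([σ],∂[τ])`; conversely, `|f|` is constant along the dual graph of a coherent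
`f`, hence constant, and `τ ↦ sgn([σ],∂[τ]) · f σ / |f|` is a disorientation.
The lemmas are indexed by `m = n - 1`.
-/

open Finset Matrix

theorem Finset.two_mul_card_mul_sum_sq_sub_sq_sum {ι R : Type*} [CommRing R] (s : Finset ι)
    (x : ι → R) :
    2 * (#s * ∑ i ∈ s, x i ^ 2 - (∑ i ∈ s, x i) ^ 2) = ∑ i ∈ s, ∑ j ∈ s, (x i - x j) ^ 2 := by
  simp only [sub_sq, sum_add_distrib, sum_sub_distrib, sum_const, nsmul_eq_mul]
  rw [sq (∑ i ∈ s, x i), sum_mul_sum, ← mul_sum]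
  simp only [mul_assoc (2 : R), ← mul_sum]
  ring

theorem Finset.eq_of_sq_sum_eq_card_mul_sum_sq {ι R : Type*} [CommRing R] [LinearOrder R]
    [IsStrictOrderedRing R] {s : Finset ι} {x : ι → R}
    (h : (∑ i ∈ s, x i) ^ 2 = #s * ∑ i ∈ s, x i ^ 2) {i j : ι} (hi : i ∈ s) (hj : j ∈ s) :
    x i = x j := by
  have hzero : ∑ i ∈ s, ∑ j ∈ s, (x i - x j) ^ 2 = 0 := by
    rw [← two_mul_card_mul_sum_sq_sub_sq_sum, h, sub_self, mul_zero]
  have hi' := (sum_eq_zero_iff_of_nonneg fun i _ => sum_nonneg fun j _ => sq_nonneg _).1 hzero i hi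
  have hij := (sum_eq_zero_iff_of_nonneg fun j _ => sq_nonneg _).1 hi' j hj
  exact sub_eq_zero.1 (pow_eq_zero_iff two_ne_zero |>.1 hij)

section
variable {U : Type*} [LinearOrder U]

theorem sgnZ_sq {σ τ : Finset U} (hστ : σ ⊆ τ) (hcard : #τ = #σ + 1) : sgnZ σ τ ^ 2 = 1 := by
  obtain ⟨v, hv⟩ := card_eq_one.1 (show #(τ \ σ) = 1 by rw [card_sdiff_of_subset hστ]; omega)
  rw [sgnZ, hv, sum_singleton, ← pow_mul, mul_comm]
  exact (even_two_mul _).neg_one_pow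

variable {K : Finset (Finset U)} {m : ℕ}

theorem sgnZ_sq_of_mem_faces {σ τ : Finset U} (hσ : σ ∈ faces K m) (hτ : τ ∈ faces K (m + 1))
    (hστ : σ ⊆ τ) : (sgnZ σ τ : ℝ) ^ 2 = 1 := by
  exact_mod_cast sgnZ_sq hστ (by rw [(mem_filter.1 hσ).2, (mem_filter.1 hτ).2])

theorem filter_faces_subset_eq_powersetCard (hK : IsSimplicialComplex K) {τ : Finset U}
    (hτ : τ ∈ faces K (m + 1)) : {σ ∈ faces K m | σ ⊆ τ} = τ.powersetCard (m + 1) := by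
  ext σ
  simp only [faces, mem_filter, mem_powersetCard]
  refine ⟨fun ⟨⟨_, hσ⟩, hστ⟩ => ⟨hστ, hσ⟩, fun ⟨hστ, hσ⟩ => ⟨⟨?_, hσ⟩, hστ⟩⟩
  exact hK.2 τ (mem_filter.1 hτ).1 σ hστ (card_pos.1 (by omega))

theorem card_facets (hK : IsSimplicialComplex K) {τ : Finset U} (hτ : τ ∈ faces K (m + 1)) :
    #{σ : {σ // σ ∈ faces K m} | σ.1 ⊆ τ} = m + 2 := by
  rw [univ_eq_attach, filter_attach (· ⊆ τ), card_map, card_attach,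
    filter_faces_subset_eq_powersetCard hK hτ, card_powersetCard, (mem_filter.1 hτ).2,
    Nat.choose_succ_self_right]

theorem exists_facet (hK : IsSimplicialComplex K) {τ : Finset U} (hτ : τ ∈ faces K (m + 1)) :
    ∃ ρ : {σ // σ ∈ faces K m}, ρ.1 ⊆ τ := by
  obtain ⟨ρ, hρ⟩ := card_pos.1 (show 0 < #{σ : {σ // σ ∈ faces K m} | σ.1 ⊆ τ} by
    rw [card_facets hK hτ]; omega)
  exact ⟨ρ, (mem_filter.1 hρ).2⟩

theorem degS_eq_card {σ : Finset U} (hσ : #σ = m + 1) :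
    degS K σ = #{τ ∈ faces K (m + 1) | σ ⊆ τ} := by
  rw [degS, faces, filter_filter, hσ]
  simp only [and_comm]

theorem degS_ne_zero (hcof : ∀ σ ∈ faces K m, ∃ τ ∈ faces K (m + 1), σ ⊆ τ) {σ : Finset U}
    (hσ : σ ∈ faces K m) : degS K σ ≠ 0 := by
  obtain ⟨τ, hτ, hστ⟩ := hcof σ hσ
  rw [degS_eq_card (mem_filter.1 hσ).2]
  exact card_ne_zero_of_mem (mem_filter.2 ⟨hτ, hστ⟩)

noncomputable def coboundary (K : Finset (Finset U)) (m : ℕ) (f : {σ // σ ∈ faces K m} → ℝ)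
    (τ : Finset U) : ℝ :=
  ∑ σ with σ.1 ⊆ τ, (sgnZ σ.1 τ : ℝ) * f σ

def IsCoherent (K : Finset (Finset U)) (m : ℕ) (f : {σ // σ ∈ faces K m} → ℝ) : Prop :=
  ∀ τ ∈ faces K (m + 1), ∀ σ σ' : {σ // σ ∈ faces K m}, σ.1 ⊆ τ → σ'.1 ⊆ τ →
    (sgnZ σ.1 τ : ℝ) * f σ = sgnZ σ'.1 τ * f σ'

def DualAdj (K : Finset (Finset U)) (m : ℕ) (a b : Finset U) : Prop :=
  a ∈ faces K m ∧ b ∈ faces K m ∧ a ≠ b ∧ ∃ τ ∈ faces K (m + 1), a ⊆ τ ∧ b ⊆ τ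

theorem sum_faces_sum_facets_comm {M : Type*} [AddCommMonoid M]
    (h : {σ // σ ∈ faces K m} → Finset U → M) :
    ∑ τ ∈ faces K (m + 1), ∑ σ with σ.1 ⊆ τ, h σ τ =
      ∑ σ, ∑ τ ∈ faces K (m + 1) with σ.1 ⊆ τ, h σ τ :=
  sum_comm' fun τ σ => by simp only [mem_filter, mem_univ, true_and, and_comm]

theorem degS_mul_upLapMatrix (σ σ' : {σ // σ ∈ faces K m}) :
    (degS K σ.1 : ℝ) * upLapMatrix K m σ σ' =
      ∑ τ ∈ faces K (m + 1) with σ.1 ⊆ τ ∧ σ'.1 ⊆ τ, (sgnZ σ.1 τ : ℝ) * sgnZ σ'.1 τ := by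
  have hdeg := degS_eq_card (K := K) (mem_filter.1 σ.2).2
  by_cases h : σ = σ'
  · subst h
    simp only [upLapMatrix, if_pos, mul_one, and_self, hdeg]
    rw [sum_congr rfl fun τ hτ => by
      rw [← sq, sgnZ_sq_of_mem_faces σ.2 (mem_filter.1 hτ).1 (mem_filter.1 hτ).2]]
    simp
  · rw [upLapMatrix, if_neg h, ← mul_assoc]
    unfold faces
    rw [filter_filter]
    rcases eq_or_ne (degS K σ.1) 0 with h0 | h0
    -- `σ` has no cofacet: the left side is `0⁻¹ = 0` and the right side an empty sum.
    · rw [h0, Nat.cast_zero, zero_mul, zero_mul]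
      refine (sum_eq_zero fun τ hτ => ?_).symm
      obtain ⟨hτK, hτcard, hστ, -⟩ := mem_filter.1 hτ
      refine absurd h0 ?_
      rw [hdeg]
      exact card_ne_zero_of_mem (mem_filter.2 ⟨mem_filter.2 ⟨hτK, hτcard⟩, hστ⟩)
    · rw [mul_inv_cancel₀ (by exact_mod_cast h0), one_mul]

theorem degS_mul_upLapMatrix_mulVec (f : {σ // σ ∈ faces K m} → ℝ)
    (σ : {σ // σ ∈ faces K m}) :
    (degS K σ.1 : ℝ) * (upLapMatrix K m *ᵥ f) σ =
      ∑ τ ∈ faces K (m + 1) with σ.1 ⊆ τ, (sgnZ σ.1 τ : ℝ) * coboundary K m f τ := by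
  simp only [mulVec, dotProduct, mul_sum, ← mul_assoc, degS_mul_upLapMatrix, coboundary, sum_mul]
  exact sum_comm' fun σ' τ => by simp only [mem_filter, mem_univ, true_and]; tauto

theorem sum_coboundary_mul (f : {σ // σ ∈ faces K m} → ℝ) (g : Finset U → ℝ) :
    ∑ τ ∈ faces K (m + 1), coboundary K m f τ * g τ =
      ∑ σ, f σ * ∑ τ ∈ faces K (m + 1) with σ.1 ⊆ τ, (sgnZ σ.1 τ : ℝ) * g τ := by
  simp only [coboundary, sum_mul, mul_sum]
  rw [sum_faces_sum_facets_comm]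
  exact sum_congr rfl fun σ _ => sum_congr rfl fun τ _ => by ring

theorem IsCoherent.coboundary_eq (hK : IsSimplicialComplex K) {f : {σ // σ ∈ faces K m} → ℝ}
    (hf : IsCoherent K m f) {τ : Finset U} (hτ : τ ∈ faces K (m + 1))
    {ρ : {σ // σ ∈ faces K m}} (hρ : ρ.1 ⊆ τ) :
    coboundary K m f τ = (m + 2) * (sgnZ ρ.1 τ * f ρ) := by
  rw [coboundary, sum_congr rfl fun σ hσ => hf τ hτ σ ρ (mem_filter.1 hσ).2 hρ, sum_const,
    card_facets hK hτ, nsmul_eq_mul]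
  push_cast
  ring

theorem IsCoherent.upLapMatrix_mulVec (hK : IsSimplicialComplex K)
    (hcof : ∀ σ ∈ faces K m, ∃ τ ∈ faces K (m + 1), σ ⊆ τ)
    {f : {σ // σ ∈ faces K m} → ℝ} (hf : IsCoherent K m f) :
    upLapMatrix K m *ᵥ f = ((m : ℝ) + 2) • f := by
  funext σ
  refine mul_left_cancel₀ (Nat.cast_ne_zero.2 (degS_ne_zero hcof σ.2)) ?_
  rw [degS_mul_upLapMatrix_mulVec, Pi.smul_apply, smul_eq_mul,
    degS_eq_card (mem_filter.1 σ.2).2]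
  have hterm : ∀ τ ∈ {τ ∈ faces K (m + 1) | σ.1 ⊆ τ},
      (sgnZ σ.1 τ : ℝ) * coboundary K m f τ = (m + 2) * f σ := fun τ hτ => by
    obtain ⟨hτ, hστ⟩ := mem_filter.1 hτ
    rw [hf.coboundary_eq hK hτ hστ]
    linear_combination (m + 2) * f σ * sgnZ_sq_of_mem_faces σ.2 hτ hστ
  rw [sum_congr rfl hterm, sum_const, nsmul_eq_mul]

theorem isCoherent_of_upLapMatrix_mulVec (hK : IsSimplicialComplex K)
    {f : {σ // σ ∈ faces K m} → ℝ} (hf : upLapMatrix K m *ᵥ f = ((m : ℝ) + 2) • f) :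
    IsCoherent K m f := by
  have hsq : ∀ τ ∈ faces K (m + 1), ∑ σ with σ.1 ⊆ τ, ((sgnZ σ.1 τ : ℝ) * f σ) ^ 2 =
      ∑ σ with σ.1 ⊆ τ, f σ ^ 2 := fun τ hτ => sum_congr rfl fun σ hσ => by
    rw [mul_pow, sgnZ_sq_of_mem_faces σ.2 hτ (mem_filter.1 hσ).2, one_mul]
  have hcs : ∀ τ ∈ faces K (m + 1),
      coboundary K m f τ ^ 2 ≤ (m + 2) * ∑ σ with σ.1 ⊆ τ, f σ ^ 2 := fun τ hτ => by
    have := sq_sum_le_card_mul_sum_sq (s := {σ | σ.1 ⊆ τ}) (f := fun σ => (sgnZ σ.1 τ : ℝ) * f σ)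
    rw [card_facets hK hτ, hsq τ hτ] at this
    exact_mod_cast this
  have hdeg : ∀ σ : {σ // σ ∈ faces K m},
      ∑ τ ∈ faces K (m + 1) with σ.1 ⊆ τ, (sgnZ σ.1 τ : ℝ) * coboundary K m f τ =
        (m + 2) * (#{τ ∈ faces K (m + 1) | σ.1 ⊆ τ} * f σ) := fun σ => by
    rw [← degS_mul_upLapMatrix_mulVec, hf, degS_eq_card (mem_filter.1 σ.2).2, Pi.smul_apply,
      smul_eq_mul]
    ring
  have htotal : ∑ τ ∈ faces K (m + 1), coboundary K m f τ ^ 2 =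
      ∑ τ ∈ faces K (m + 1), (m + 2) * ∑ σ with σ.1 ⊆ τ, f σ ^ 2 := by
    simp only [sq, sum_coboundary_mul, hdeg, ← mul_sum, sum_faces_sum_facets_comm, sum_const,
      nsmul_eq_mul]
    rw [mul_sum]
    exact sum_congr rfl fun σ _ => by ring
  intro τ hτ σ σ' hσ hσ'
  refine eq_of_sq_sum_eq_card_mul_sum_sq (s := {σ | σ.1 ⊆ τ})
    (x := fun σ => (sgnZ σ.1 τ : ℝ) * f σ) ?_ (mem_filter.2 ⟨mem_univ _, hσ⟩)
    (mem_filter.2 ⟨mem_univ _, hσ'⟩)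
  rw [card_facets hK hτ, hsq τ hτ]
  exact_mod_cast (sum_eq_sum_iff_of_le hcs).1 htotal τ hτ

theorem hasEigenvalue_iff_exists_isCoherent (hK : IsSimplicialComplex K)
    (hcof : ∀ σ ∈ faces K m, ∃ τ ∈ faces K (m + 1), σ ⊆ τ) :
    Module.End.HasEigenvalue (upLapMatrix K m).mulVecLin ((m : ℝ) + 2) ↔
      ∃ f, f ≠ 0 ∧ IsCoherent K m f := by
  rw [Module.End.hasEigenvalue_iff, Submodule.ne_bot_iff]
  simp only [Module.End.mem_eigenspace_iff, mulVecLin_apply]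
  exact ⟨fun ⟨f, hf, hf0⟩ => ⟨f, hf0, isCoherent_of_upLapMatrix_mulVec hK hf⟩,
    fun ⟨f, hf0, hf⟩ => ⟨f, hf.upLapMatrix_mulVec hK hcof, hf0⟩⟩

theorem IsCoherent.sq_eq (hconn : ∀ σ ∈ faces K m, ∀ σ' ∈ faces K m,
      Relation.ReflTransGen (DualAdj K m) σ σ')
    {f : {σ // σ ∈ faces K m} → ℝ} (hf : IsCoherent K m f) (σ σ' : {σ // σ ∈ faces K m}) :
    f σ ^ 2 = f σ' ^ 2 := by
  let g : Finset U → ℝ := fun ρ => if h : ρ ∈ faces K m then f ⟨ρ, h⟩ ^ 2 else 0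
  have hg : ∀ a b, Relation.ReflTransGen (DualAdj K m) a b → g a = g b := by
    intro a b hab
    induction hab with
    | refl => rfl
    | tail _ hbc ih =>
      obtain ⟨hb, hc, -, τ, hτ, hbτ, hcτ⟩ := hbc
      have := congrArg (· ^ 2) (hf τ hτ ⟨_, hb⟩ ⟨_, hc⟩ hbτ hcτ)
      simp only [mul_pow, sgnZ_sq_of_mem_faces hb hτ hbτ, sgnZ_sq_of_mem_faces hc hτ hcτ,
        one_mul] at this
      rw [ih]
      simpa only [g, dif_pos hb, dif_pos hc] using this
  simpa only [g, dif_pos σ.2, dif_pos σ'.2] using hg _ _ (hconn σ.1 σ.2 σ'.1 σ'.2)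

theorem exists_isCoherent_of_disorientable (hK : IsSimplicialComplex K)
    (hcof : ∀ σ ∈ faces K m, ∃ τ ∈ faces K (m + 1), σ ⊆ τ) (hne : (faces K (m + 1)).Nonempty)
    (h : Disorientable K (m + 1)) : ∃ f, f ≠ 0 ∧ IsCoherent K m f := by
  obtain ⟨ε, hε, hcompat⟩ := h
  choose! τ hτ hστ using hcof
  have hf : ∀ σ : {σ // σ ∈ faces K m}, ∀ τ' ∈ faces K (m + 1), σ.1 ⊆ τ' →
      (sgnZ σ.1 τ' : ℝ) * (ε (τ σ) * sgnZ σ.1 (τ σ)) = ε τ' := fun σ τ' hτ' hστ' => by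
    rw [hcompat σ σ.2 _ (hτ σ σ.2) τ' hτ' (hστ σ σ.2) hστ']
    linear_combination ε τ' * sgnZ_sq_of_mem_faces σ.2 hτ' hστ'
  refine ⟨fun σ => ε (τ σ) * sgnZ σ.1 (τ σ), fun h0 => ?_,
    fun τ' hτ' σ σ' hσ hσ' => (hf σ τ' hτ' hσ).trans (hf σ' τ' hτ' hσ').symm⟩
  obtain ⟨τ₀, hτ₀⟩ := hne
  obtain ⟨ρ, hρ⟩ := exists_facet hK hτ₀
  have := hf ρ τ₀ hτ₀ hρ
  rw [congrFun h0 ρ, Pi.zero_apply, mul_zero] at this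
  rcases hε τ₀ hτ₀ with h | h <;> linarith

theorem disorientable_of_isCoherent (hK : IsSimplicialComplex K)
    (hconn : ∀ σ ∈ faces K m, ∀ σ' ∈ faces K m,
      Relation.ReflTransGen (DualAdj K m) σ σ')
    {f : {σ // σ ∈ faces K m} → ℝ} (hf0 : f ≠ 0) (hf : IsCoherent K m f) :
    Disorientable K (m + 1) := by
  obtain ⟨σ₀, hσ₀⟩ : ∃ σ₀, f σ₀ ≠ 0 := Function.ne_iff.1 hf0
  have hε : ∀ τ ∈ faces K (m + 1), ∀ ρ : {σ // σ ∈ faces K m}, ρ.1 ⊆ τ →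
      coboundary K m f τ / ((m + 2) * |f σ₀|) = sgnZ ρ.1 τ * f ρ / |f σ₀| :=
    fun τ hτ ρ hρ => by
      rw [hf.coboundary_eq hK hτ hρ, mul_div_mul_left _ _ (by positivity)]
  refine ⟨fun τ => coboundary K m f τ / ((m + 2) * |f σ₀|), fun τ hτ => ?_,
    fun ρ hρ τ hτ τ' hτ' hρτ hρτ' => ?_⟩
  · obtain ⟨ρ, hρ⟩ := exists_facet hK hτ
    have habs : |(sgnZ ρ.1 τ : ℝ) * f ρ| = |f σ₀| := by
      rw [← sq_eq_sq_iff_abs_eq_abs, mul_pow, sgnZ_sq_of_mem_faces ρ.2 hτ hρ, one_mul,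
        hf.sq_eq hconn]
    simp only [hε τ hτ ρ hρ]
    rcases abs_eq (abs_nonneg _) |>.1 habs with h | h <;> rw [h]
    · exact Or.inl (div_self (abs_ne_zero.2 hσ₀))
    · exact Or.inr (by rw [neg_div, div_self (abs_ne_zero.2 hσ₀)])
  · simp only [hε τ hτ ⟨ρ, hρ⟩ hρτ, hε τ' hτ' ⟨ρ, hρ⟩ hρτ']
    linear_combination (f ⟨ρ, hρ⟩ / |f σ₀|) *
      (sgnZ_sq_of_mem_faces hρ hτ hρτ - sgnZ_sq_of_mem_faces hρ hτ' hρτ')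

end

theorem stmt16_general {U : Type*} [LinearOrder U] (K : Finset (Finset U))
    (hK : IsSimplicialComplex K) (n : ℕ) (hn : 1 ≤ n)
    (hdim_top : (faces K n).Nonempty)
    (hcof : ∀ σ ∈ faces K (n - 1), ∃ τ ∈ faces K n, σ ⊆ τ)
    (hconn : ∀ σ ∈ faces K (n - 1), ∀ σ' ∈ faces K (n - 1),
      Relation.ReflTransGen
        (fun a b => a ∈ faces K (n - 1) ∧ b ∈ faces K (n - 1) ∧ a ≠ b ∧
          ∃ τ ∈ faces K n, a ⊆ τ ∧ b ⊆ τ) σ σ') :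
    Disorientable K n ↔
      Module.End.HasEigenvalue (upLapMatrix K (n - 1)).mulVecLin ((n : ℝ) + 1) := by
  obtain ⟨m, rfl⟩ : ∃ m, n = m + 1 := ⟨n - 1, by omega⟩
  rw [Nat.add_sub_cancel] at hcof hconn ⊢
  rw [show ((m + 1 : ℕ) : ℝ) + 1 = m + 2 by push_cast; ring,
    hasEigenvalue_iff_exists_isCoherent hK hcof]
  exact ⟨exists_isCoherent_of_disorientable hK hcof hdim_top,
    fun ⟨_, hf0, hf⟩ => disorientable_of_isCoherent hK hconn hf0 hf⟩

/-- A finite `n`-dimensional simplicial complex (every `(n−1)`-simplex being a facet of some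
`n`-simplex, with connected dual graph on `Σ_{n−1}`) is disorientable iff its normalized
up-Laplacian `Δ_{n−1}^up` attains the maximal possible eigenvalue `n+1`. -/
theorem stmt16 {U : Type*} [LinearOrder U] (K : Finset (Finset U))
    (hK : IsSimplicialComplex K) (n : ℕ) (hn : 1 ≤ n)
    (hdim_top : (faces K n).Nonempty)
    (hdim : ∀ σ ∈ K, σ.card ≤ n + 1)
    (hcof : ∀ σ ∈ faces K (n - 1), ∃ τ ∈ faces K n, σ ⊆ τ)
    (hconn : ∀ σ ∈ faces K (n - 1), ∀ σ' ∈ faces K (n - 1),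
      Relation.ReflTransGen
        (fun a b => a ∈ faces K (n - 1) ∧ b ∈ faces K (n - 1) ∧ a ≠ b ∧
          ∃ τ ∈ faces K n, a ⊆ τ ∧ b ⊆ τ) σ σ') :
    Disorientable K n ↔
      Module.End.HasEigenvalue (upLapMatrix K (n - 1)).mulVecLin ((n : ℝ) + 1) :=
  stmt16_general K hK n hn hdim_top hcof hconn
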